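/- arXiv:0811.2071 — 3 statements merged into one kernel-verified Lean document; each statement's English description precedes it below -/
import Mathlib

section
/- In the high temperature region 2α·tanh(β) < 1, the quenched Gibbs average of the squared magnetization is of order 1/N: there exists a constant C = C(α,β) such that ⟨m²⟩ = E Ω(σ_{i₀}σ_{j₀}) ≤ C/N for all system sizes N. -/
/-! High-temperature expansion. For `s = ±1`, `exp (β s) = cosh β (1 + tanh β s)`, so both the
partition function and the numerator of `Ω(σ_a σ_b)` become `cosh β ^ K 2 ^ N` times a sum of
`tanh β ^ |S|` over edge sets `S`: those with all degrees even, resp. those whose odd-degree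
vertices are `a` and `b`. Every set of the second kind splits into a trail from `a` to `b` and a
set of the first kind, so `Ω(σ_a σ_b)` is at most the total weight `∑ tanh β ^ L` of the trails
from `a` to `b`. Averaging over the disorder, a trail shape of length `L` (there are
`K (K-1) ⋯ (K-L+1) 2 ^ L N ^ (L+1)` of them) is present with probability `N ^ (-2L)`, and the
Poisson factorial moments `(αN) ^ L` turn `∑_{a,b} Ω(σ_a σ_b)` into at most
`N ∑_L (2 α tanh β) ^ L`, a convergent geometric series when `2 α tanh β < 1`. -/

open Filter Topology Finset

noncomputable section

/-- The value of an Ising spin encoded as a Boolean: `true ↦ +1`, `false ↦ -1`. -/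
def spin (b : Bool) : ℝ := if b then 1 else -1

/-- The Hamiltonian of the dilute ferromagnet on `N` sites, given the list of `k`
random edges `e`: `H = -∑_{ν} σ_{i_ν} σ_{j_ν}`. -/
def ham (N k : ℕ) (e : Fin k → Fin N × Fin N) (σ : Fin N → Bool) : ℝ :=
  -∑ ν : Fin k, spin (σ (e ν).1) * spin (σ (e ν).2)

/-- The partition function `Z_N(β)` for a given realization of the edges. -/
def partZ (N k : ℕ) (β : ℝ) (e : Fin k → Fin N × Fin N) : ℝ :=
  ∑ σ : Fin N → Bool, Real.exp (-β * ham N k e σ)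

/-- The Gibbs (Boltzmann) expectation `Ω(O)` for a given realization of the edges. -/
def gibbs (N k : ℕ) (β : ℝ) (e : Fin k → Fin N × Fin N) (O : (Fin N → Bool) → ℝ) : ℝ :=
  (∑ σ : Fin N → Bool, Real.exp (-β * ham N k e σ) * O σ) / partZ N k β e

/-- The Poisson probability weight `P(K = k) = e^{-ζ} ζ^k / k!`. -/
def poissonWeight (ζ : ℝ) (k : ℕ) : ℝ := Real.exp (-ζ) * ζ ^ k / (Nat.factorial k)

/-- The quenched expectation `𝔼`: average over the Poisson number `K` of edges
(of mean `α N`) and over the i.i.d. uniform random endpoints of the edges, of a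
disorder-dependent quantity `F`. -/
def quenchedExp (N : ℕ) (α : ℝ) (F : (k : ℕ) → (Fin k → Fin N × Fin N) → ℝ) : ℝ :=
  ∑' k : ℕ, poissonWeight (α * N) k *
    ((∑ e : Fin k → Fin N × Fin N, F k e) / (N : ℝ) ^ (2 * k))

/-- The magnetization `m(σ) = (1/N) ∑_i σ_i`. -/
def mag (N : ℕ) (σ : Fin N → Bool) : ℝ := (∑ i : Fin N, spin (σ i)) / N

/-- The quenched Gibbs average `⟨O⟩ = 𝔼 Ω(O)`. -/
def qGibbs (N : ℕ) (α β : ℝ) (O : (Fin N → Bool) → ℝ) : ℝ :=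
  quenchedExp N α (fun k e => gibbs N k β e O)

namespace DiluteFerromagnet

lemma tanh_nonneg {β : ℝ} (hβ : 0 ≤ β) : 0 ≤ Real.tanh β := by
  rw [Real.tanh_eq_sinh_div_cosh]
  exact div_nonneg (Real.sinh_nonneg_iff.2 hβ) (Real.cosh_pos β).le

lemma exp_mul_eq_cosh_mul_one_add_tanh_mul (β : ℝ) {s : ℝ} (hs : s = 1 ∨ s = -1) :
    Real.exp (β * s) = Real.cosh β * (1 + Real.tanh β * s) := by
  have hsinh : Real.cosh β * Real.tanh β = Real.sinh β := by
    rw [Real.tanh_eq_sinh_div_cosh, mul_div_cancel₀ _ (Real.cosh_pos β).ne']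
  rcases hs with rfl | rfl
  · rw [mul_one, mul_one, mul_one_add, hsinh, Real.cosh_add_sinh]
  · rw [mul_neg_one, mul_neg_one, mul_add, mul_neg, hsinh, mul_one, ← sub_eq_add_neg,
      Real.cosh_sub_sinh]

section Spin

variable {ι : Type*} [Fintype ι] [DecidableEq ι]

lemma spin_eq_one_or_eq_neg_one (b : Bool) : spin b = 1 ∨ spin b = -1 := by
  cases b <;> simp [spin]

lemma sum_spin_pow (n : ℕ) : ∑ b : Bool, spin b ^ n = if Even n then 2 else 0 := by
  rcases Nat.even_or_odd n with h | h
  · simp [spin, h, h.neg_one_pow, one_add_one_eq_two]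
  · simp [spin, Nat.not_even_iff_odd.2 h, h.neg_one_pow]

lemma sum_prod_spin_pow (m : ι → ℕ) :
    ∑ σ : ι → Bool, ∏ i, spin (σ i) ^ m i =
      if ∀ i, Even (m i) then 2 ^ Fintype.card ι else 0 := by
  rw [← Fintype.prod_sum fun i b => spin b ^ m i]
  simp only [sum_spin_pow]
  split_ifs with h
  · rw [prod_congr rfl fun i _ => if_pos (h i), prod_const, card_univ]
  · obtain ⟨i, hi⟩ := not_forall.1 h
    exact prod_eq_zero (mem_univ i) (if_neg hi)

end Spin

section Counting

lemma image_fin_cons {α : Type*} [DecidableEq α] {L : ℕ} (x : α) (f : Fin L → α) :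
    univ.image (Fin.cons x f : Fin (L + 1) → α) = insert x (univ.image f) := by
  ext y
  simp [Fin.exists_fin_succ, eq_comm]

lemma card_filter_forall_apply_eq {ι κ X : Type*} [Fintype ι] [Fintype κ] [DecidableEq κ]
    [Fintype X] [DecidableEq X] {ν : ι → κ} (hν : Function.Injective ν) (c : ι → X) :
    #(univ.filter fun f : κ → X => ∀ t, f (ν t) = c t) =
      Fintype.card X ^ (Fintype.card κ - Fintype.card ι) := by
  have hpi : univ.filter (fun f : κ → X => ∀ t, f (ν t) = c t) =
      Fintype.piFinset fun j => univ.filter fun x => ∀ t, ν t = j → x = c t := by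
    ext f
    simp only [mem_filter, mem_univ, true_and, Fintype.mem_piFinset]
    exact ⟨fun h j t hj => hj ▸ h t, fun h t => h _ t rfl⟩
  have hfiber : ∀ j, #(univ.filter fun x => ∀ t, ν t = j → x = c t) =
      if j ∈ univ.image ν then 1 else Fintype.card X := fun j => by
    split_ifs with hj
    · obtain ⟨t₀, -, rfl⟩ := mem_image.1 hj
      rw [card_eq_one]
      exact ⟨c t₀, by ext x; simp [hν.eq_iff]⟩
    · rw [filter_true_of_mem fun x _ t (ht : ν t = j) =>
        absurd (ht ▸ mem_image_of_mem ν (mem_univ t)) hj, card_univ]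
  have hcompl : univ.filter (fun j => j ∉ univ.image ν) = (univ.image ν)ᶜ := by
    ext j
    simp
  rw [hpi, Fintype.card_piFinset, prod_congr rfl fun j _ => hfiber j, prod_ite, prod_const_one,
    one_mul, prod_const, hcompl, card_compl, card_image_of_injective _ hν, card_univ]

lemma card_filter_injective (α β : Type*) [Fintype α] [DecidableEq α] [Fintype β]
    [DecidableEq β] :
    #(univ.filter fun f : α → β => Function.Injective f) =
      (Fintype.card β).descFactorial (Fintype.card α) := by
  rw [← Fintype.card_subtype, Fintype.card_congr (Equiv.subtypeInjectiveEquivEmbedding α β),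
    Fintype.card_embedding_eq]

end Counting

section Multigraph

variable {V : Type*} [DecidableEq V] {k : ℕ}

def incidence (p : V × V) (i : V) : ℕ :=
  (if p.1 = i then 1 else 0) + (if p.2 = i then 1 else 0)

def degree (e : Fin k → V × V) (S : Finset (Fin k)) (i : V) : ℕ :=
  ∑ ν ∈ S, incidence (e ν) i

lemma spin_mul_spin_eq_prod_pow [Fintype V] (σ : V → Bool) (p : V × V) :
    spin (σ p.1) * spin (σ p.2) = ∏ i, spin (σ i) ^ incidence p i := by
  simp only [incidence, pow_add, prod_mul_distrib, pow_ite, pow_one, pow_zero, prod_ite_eq,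
    mem_univ, if_true]

lemma prod_spin_mul_spin_eq_prod_pow_degree [Fintype V] (e : Fin k → V × V) (σ : V → Bool)
    (S : Finset (Fin k)) :
    ∏ ν ∈ S, spin (σ (e ν).1) * spin (σ (e ν).2) = ∏ i, spin (σ i) ^ degree e S i := by
  simp_rw [spin_mul_spin_eq_prod_pow, degree, ← prod_pow_eq_pow_sum]
  exact prod_comm

def orient (p : V × V) (ε : Bool) : V × V := if ε then p else p.swap

omit [DecidableEq V] in
lemma orient_eq_iff {p q : V × V} {ε : Bool} : orient p ε = q ↔ p = orient q ε := by
  cases ε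
  · exact ⟨fun h => by simp [orient, ← h], fun h => by simp [orient, h]⟩
  · rfl

lemma incidence_orient (p : V × V) (ε : Bool) : incidence (orient p ε) = incidence p := by
  funext i
  cases ε <;> simp [orient, incidence, add_comm]

/-- A trail of length `L` is encoded by its edges `ν t`, their orientations `ε t` and its
vertices `v t`; edge `ν t` is traversed from `v t` to `v (t + 1)`. -/
abbrev TrailData (V : Type*) (k L : ℕ) : Type _ :=
  (Fin L → Fin k) × (Fin L → Bool) × (Fin (L + 1) → V)

def IsTrail (e : Fin k → V × V) {L : ℕ} (w : TrailData V k L) : Prop :=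
  Function.Injective w.1 ∧ ∀ t, orient (e (w.1 t)) (w.2.1 t) = (w.2.2 t.castSucc, w.2.2 t.succ)

instance (e : Fin k → V × V) {L : ℕ} (w : TrailData V k L) : Decidable (IsTrail e w) := by
  unfold IsTrail
  infer_instance

omit [DecidableEq V] in
lemma IsTrail.length_le {e : Fin k → V × V} {L : ℕ} {w : TrailData V k L} (h : IsTrail e w) :
    L ≤ k := by
  simpa using Fintype.card_le_of_injective _ h.1

lemma exists_orient_eq_of_degree_ne_zero {e : Fin k → V × V} {S : Finset (Fin k)} {a : V}
    (h : degree e S a ≠ 0) : ∃ ν ∈ S, ∃ ε x, orient (e ν) ε = (a, x) := by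
  obtain ⟨ν, hν, hinc⟩ := exists_ne_zero_of_sum_ne_zero h
  refine ⟨ν, hν, ?_⟩
  by_cases h₁ : (e ν).1 = a
  · exact ⟨true, (e ν).2, by rw [← h₁]; rfl⟩
  by_cases h₂ : (e ν).2 = a
  · exact ⟨false, (e ν).1, by rw [← h₂]; rfl⟩
  simp [incidence, h₁, h₂] at hinc

lemma degree_eq_degree_erase_add {e : Fin k → V × V} {S : Finset (Fin k)} {ν : Fin k}
    (hν : ν ∈ S) {ε : Bool} {a x : V} (hx : orient (e ν) ε = (a, x)) (i : V) :
    degree e S i = degree e (S.erase ν) i + incidence (a, x) i := by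
  rw [degree, ← add_sum_erase _ _ hν, ← incidence_orient (e ν) ε, hx, add_comm, degree]

/-- The parity hypothesis says that the odd-degree vertices of `S` are exactly `a` and `b`
(none if `a = b`). -/
lemma exists_trail (e : Fin k → V × V) (S : Finset (Fin k)) (a b : V)
    (hS : ∀ i, Even (degree e S i + incidence (a, b) i)) :
    ∃ (L : ℕ) (w : TrailData V k L), IsTrail e w ∧ w.2.2 0 = a ∧ w.2.2 (Fin.last L) = b ∧
      univ.image w.1 ⊆ S ∧ ∀ i, Even (degree e (S \ univ.image w.1) i) := by
  induction S using Finset.strongInduction generalizing a with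
  | H S ih =>
  by_cases hab : a = b
  · subst hab
    refine ⟨0, (Fin.elim0, Fin.elim0, fun _ => a), ⟨fun t => t.elim0, fun t => t.elim0⟩, rfl, rfl,
      by simp, fun i => ?_⟩
    have h := hS i
    dsimp only
    rw [univ_eq_empty, image_empty, sdiff_empty]
    rw [Nat.even_iff] at h ⊢
    simp only [incidence] at h
    split_ifs at h <;> omega
  obtain ⟨ν₀, hν₀, ε₀, x, hx⟩ :=
    exists_orient_eq_of_degree_ne_zero fun h : degree e S a = 0 => by
      simpa [h, incidence, Ne.symm hab] using hS a
  have hdeg := degree_eq_degree_erase_add hν₀ hx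
  -- the remaining edges have odd-degree vertices `x` and `b`
  have hS' : ∀ i, Even (degree e (S.erase ν₀) i + incidence (x, b) i) := fun i => by
    have h := hS i
    rw [hdeg i] at h
    rw [Nat.even_iff] at h ⊢
    simp only [incidence] at h ⊢
    split_ifs at h ⊢ <;> omega
  obtain ⟨L, ⟨ν, ε, v⟩, ⟨hinj, hstep⟩, hv0, hvL, hsub, heven⟩ :=
    ih _ (erase_ssubset hν₀) x hS'
  dsimp only at hv0 hvL hsub heven
  have hν₀ν : ν₀ ∉ Set.range ν := fun ⟨t, ht⟩ =>
    notMem_erase ν₀ S (hsub (mem_image_of_mem ν (mem_univ t)) |> (ht ▸ ·))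
  refine ⟨L + 1, (Fin.cons ν₀ ν, Fin.cons ε₀ ε, Fin.cons a v),
    ⟨Fin.cons_injective_iff.2 ⟨hν₀ν, hinj⟩, fun t => ?_⟩, rfl, ?_, ?_, fun i => ?_⟩
  · cases t using Fin.cases with
    | zero => simpa [hv0] using hx
    | succ t => simpa [← Fin.succ_castSucc] using hstep t
  · simpa [← Fin.succ_last] using hvL
  · rw [image_fin_cons]
    exact insert_subset hν₀ (hsub.trans (erase_subset _ _))
  · have hdiff : S \ univ.image (Fin.cons ν₀ ν : Fin (L + 1) → Fin k) =
        S.erase ν₀ \ univ.image ν := by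
      rw [image_fin_cons, sdiff_insert, erase_sdiff_comm]
    simpa [hdiff] using heven i

variable [Fintype V]

def parityWeight (θ : ℝ) (e : Fin k → V × V) (m : V → ℕ) : ℝ :=
  ∑ S ∈ univ.filter (fun S => ∀ i, Even (degree e S i + m i)), θ ^ #S

def trails (e : Fin k → V × V) : Finset (Σ L, TrailData V k L) :=
  ((range (k + 1)).sigma fun _ => univ).filter fun γ => IsTrail e γ.2

def trailsFromTo (e : Fin k → V × V) (a b : V) : Finset (Σ L, TrailData V k L) :=
  (trails e).filter fun γ => γ.2.2.2 0 = a ∧ γ.2.2.2 (Fin.last γ.1) = b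

def trailWeight (θ : ℝ) (e : Fin k → V × V) (a b : V) : ℝ :=
  ∑ γ ∈ trailsFromTo e a b, θ ^ γ.1

lemma one_le_parityWeight_zero {θ : ℝ} (hθ : 0 ≤ θ) (e : Fin k → V × V) :
    1 ≤ parityWeight θ e 0 := by
  have hempty : (∅ : Finset (Fin k)) ∈ univ.filter (fun S => ∀ i, Even (degree e S i + 0)) := by
    simp [degree]
  simpa [parityWeight] using single_le_sum (fun S _ => pow_nonneg hθ #S) hempty

lemma parityWeight_incidence_le {θ : ℝ} (hθ : 0 ≤ θ) (e : Fin k → V × V) (a b : V) :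
    parityWeight θ e (incidence (a, b)) ≤ trailWeight θ e a b * parityWeight θ e 0 := by
  classical
  set A := univ.filter (fun S => ∀ i, Even (degree e S i + incidence (a, b) i))
  set E := univ.filter (fun S : Finset (Fin k) => ∀ i, Even (degree e S i + (0 : V → ℕ) i))
  have hsplit : ∀ S ∈ A, ∃ p : (Σ L, TrailData V k L) × Finset (Fin k),
      p ∈ trailsFromTo e a b ×ˢ E ∧ univ.image p.1.2.1 ∪ p.2 = S ∧ #S = p.1.1 + #p.2 := by
    intro S hS
    obtain ⟨L, w, htrail, h0, hL, hsub, heven⟩ := exists_trail e S a b (mem_filter.1 hS).2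
    refine ⟨(⟨L, w⟩, S \ univ.image w.1), ?_, union_sdiff_of_subset hsub, ?_⟩
    · simp only [mem_product, trailsFromTo, trails, mem_filter, mem_sigma, mem_range, E,
        Pi.zero_apply, add_zero, mem_univ, true_and, and_true]
      exact ⟨⟨⟨Nat.lt_succ_of_le htrail.length_le, htrail⟩, h0, hL⟩, heven⟩
    · rw [← card_sdiff_add_card_eq_card hsub, card_image_of_injective _ htrail.1, card_univ,
        Fintype.card_fin, add_comm]
  have : Nonempty ((Σ L, TrailData V k L) × Finset (Fin k)) :=
    ⟨(⟨0, (Fin.elim0, Fin.elim0, fun _ => a)⟩, ∅)⟩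
  choose! split hsplitE hsplitS hsplitC using hsplit
  have hinj : Set.InjOn split A := fun S hS T hT h => by
    rw [← hsplitS S hS, ← hsplitS T hT, h]
  calc parityWeight θ e (incidence (a, b))
      = ∑ S ∈ A, θ ^ (split S).1.1 * θ ^ #(split S).2 :=
        sum_congr rfl fun S hS => by rw [hsplitC S hS, pow_add]
    _ = ∑ p ∈ A.image split, θ ^ p.1.1 * θ ^ #p.2 :=
        (sum_image (f := fun p => θ ^ p.1.1 * θ ^ #p.2) hinj).symm
    _ ≤ ∑ p ∈ trailsFromTo e a b ×ˢ E, θ ^ p.1.1 * θ ^ #p.2 :=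
        sum_le_sum_of_subset_of_nonneg (image_subset_iff.2 hsplitE) fun _ _ _ => by positivity
    _ = trailWeight θ e a b * parityWeight θ e 0 := by
        rw [sum_product, trailWeight, parityWeight, sum_mul_sum]

lemma card_filter_isTrail {L : ℕ} (w : TrailData V k L) :
    #(univ.filter fun e : Fin k → V × V => IsTrail e w) =
      if Function.Injective w.1 then (Fintype.card V ^ 2) ^ (k - L) else 0 := by
  obtain ⟨ν, ε, v⟩ := w
  dsimp only
  split_ifs with hν
  · have hfilter : univ.filter (fun e : Fin k → V × V => IsTrail e (ν, ε, v)) =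
        univ.filter fun e => ∀ t, e (ν t) = orient (v t.castSucc, v t.succ) (ε t) := by
      ext e
      simp [IsTrail, hν, orient_eq_iff]
    rw [hfilter]
    convert card_filter_forall_apply_eq hν fun t => orient (v t.castSucc, v t.succ) (ε t) <;>
      simp [sq]
  · exact card_eq_zero.2 (filter_eq_empty_iff.2 fun e _ h => hν h.1)

lemma sum_sum_trailWeight (θ : ℝ) (e : Fin k → V × V) :
    ∑ a, ∑ b, trailWeight θ e a b = ∑ γ ∈ trails e, θ ^ γ.1 := by
  rw [← sum_fiberwise (trails e) (fun γ => (γ.2.2.2 0, γ.2.2.2 (Fin.last γ.1))),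
    Fintype.sum_prod_type]
  simp only [trailWeight, trailsFromTo, Prod.mk.injEq]

lemma sum_sum_sum_trailWeight (θ : ℝ) :
    ∑ e : Fin k → V × V, ∑ a, ∑ b, trailWeight θ e a b =
      ∑ L ∈ range (k + 1), (k.descFactorial L * 2 ^ L * Fintype.card V ^ (L + 1) *
        (Fintype.card V ^ 2) ^ (k - L) : ℝ) * θ ^ L := by
  simp_rw [sum_sum_trailWeight, trails, sum_filter, sum_sigma]
  rw [sum_comm]
  refine sum_congr rfl fun L _ => ?_
  have hw : ∀ w : TrailData V k L, ∑ e : Fin k → V × V, (if IsTrail e w then θ ^ L else 0) =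
      (if Function.Injective w.1 then ((Fintype.card V ^ 2) ^ (k - L) : ℝ) else 0) * θ ^ L := by
    intro w
    rw [← sum_filter, sum_const, card_filter_isTrail, nsmul_eq_mul]
    split_ifs <;> simp
  rw [sum_comm, sum_congr rfl fun w _ => hw w, ← sum_mul, sum_ite, sum_const_zero, add_zero,
    sum_const, ← univ_product_univ, filter_product_left, card_product, card_filter_injective,
    card_univ]
  simp only [Fintype.card_prod, Fintype.card_fun, Fintype.card_fin, Fintype.card_bool,
    nsmul_eq_mul]
  push_cast
  ring

end Multigraph

section HighTemperatureExpansion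

variable {N k : ℕ}

lemma exp_neg_mul_ham (β : ℝ) (e : Fin k → Fin N × Fin N) (σ : Fin N → Bool) :
    Real.exp (-β * ham N k e σ) = Real.cosh β ^ k *
      ∑ S : Finset (Fin k), Real.tanh β ^ #S * ∏ i, spin (σ i) ^ degree e S i := by
  have hbond : ∀ ν, Real.exp (β * (spin (σ (e ν).1) * spin (σ (e ν).2))) =
      Real.cosh β * (1 + Real.tanh β * (spin (σ (e ν).1) * spin (σ (e ν).2))) := fun ν => by
    refine exp_mul_eq_cosh_mul_one_add_tanh_mul β ?_
    rcases spin_eq_one_or_eq_neg_one (σ (e ν).1) with h | h <;>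
      rcases spin_eq_one_or_eq_neg_one (σ (e ν).2) with h' | h' <;> simp [h, h']
  rw [ham, neg_mul_neg, mul_sum, Real.exp_sum, prod_congr rfl fun ν _ => hbond ν,
    prod_mul_distrib, prod_const, card_univ, Fintype.card_fin, prod_one_add, powerset_univ]
  congr 1
  refine Finset.sum_congr rfl fun S _ => ?_
  rw [prod_mul_distrib, prod_const, prod_spin_mul_spin_eq_prod_pow_degree]

lemma sum_exp_neg_mul_ham_mul_prod_spin_pow (β : ℝ) (e : Fin k → Fin N × Fin N)
    (m : Fin N → ℕ) :
    ∑ σ : Fin N → Bool, Real.exp (-β * ham N k e σ) * ∏ i, spin (σ i) ^ m i =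
      Real.cosh β ^ k * 2 ^ N * parityWeight (Real.tanh β) e m := by
  have hσ : ∀ σ : Fin N → Bool, Real.exp (-β * ham N k e σ) * ∏ i, spin (σ i) ^ m i =
      Real.cosh β ^ k * ∑ S, Real.tanh β ^ #S * ∏ i, spin (σ i) ^ (degree e S i + m i) :=
    fun σ => by
      rw [exp_neg_mul_ham, mul_assoc, sum_mul]
      simp_rw [mul_assoc, ← prod_mul_distrib, ← pow_add]
  calc ∑ σ : Fin N → Bool, Real.exp (-β * ham N k e σ) * ∏ i, spin (σ i) ^ m i
      = Real.cosh β ^ k * ∑ S : Finset (Fin k),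
          Real.tanh β ^ #S * ∑ σ : Fin N → Bool, ∏ i, spin (σ i) ^ (degree e S i + m i) := by
        rw [sum_congr rfl fun σ _ => hσ σ, ← mul_sum, sum_comm]
        simp_rw [mul_sum]
    _ = Real.cosh β ^ k * 2 ^ N * parityWeight (Real.tanh β) e m := by
        rw [parityWeight, sum_filter, mul_assoc]
        congr 1
        rw [mul_sum]
        refine sum_congr rfl fun S _ => ?_
        rw [sum_prod_spin_pow, Fintype.card_fin]
        split_ifs <;> ring

lemma gibbs_spin_mul_spin (β : ℝ) (e : Fin k → Fin N × Fin N) (a b : Fin N) :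
    gibbs N k β e (fun σ => spin (σ a) * spin (σ b)) =
      parityWeight (Real.tanh β) e (incidence (a, b)) / parityWeight (Real.tanh β) e 0 := by
  have hZ : partZ N k β e = Real.cosh β ^ k * 2 ^ N * parityWeight (Real.tanh β) e 0 := by
    simpa [partZ] using sum_exp_neg_mul_ham_mul_prod_spin_pow β e 0
  have hpos : 0 < Real.cosh β ^ k * 2 ^ N := by positivity
  have hnum : ∑ σ : Fin N → Bool, Real.exp (-β * ham N k e σ) * (spin (σ a) * spin (σ b)) =
      Real.cosh β ^ k * 2 ^ N * parityWeight (Real.tanh β) e (incidence (a, b)) := by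
    rw [← sum_exp_neg_mul_ham_mul_prod_spin_pow]
    simp_rw [← spin_mul_spin_eq_prod_pow]
  rw [gibbs, hZ, hnum, mul_div_mul_left _ _ hpos.ne']

lemma gibbs_spin_mul_spin_le_trailWeight {β : ℝ} (hβ : 0 ≤ β) (e : Fin k → Fin N × Fin N)
    (a b : Fin N) :
    gibbs N k β e (fun σ => spin (σ a) * spin (σ b)) ≤ trailWeight (Real.tanh β) e a b := by
  have hθ := tanh_nonneg hβ
  rw [gibbs_spin_mul_spin, div_le_iff₀ (one_pos.trans_le (one_le_parityWeight_zero hθ e))]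
  exact parityWeight_incidence_le hθ e a b

lemma gibbs_nonneg (β : ℝ) (e : Fin k → Fin N × Fin N) {O : (Fin N → Bool) → ℝ}
    (hO : ∀ σ, 0 ≤ O σ) : 0 ≤ gibbs N k β e O :=
  div_nonneg (sum_nonneg fun σ _ => mul_nonneg (Real.exp_pos _).le (hO σ))
    (sum_nonneg fun _ _ => (Real.exp_pos _).le)

lemma gibbs_mag_sq (β : ℝ) (e : Fin k → Fin N × Fin N) :
    gibbs N k β e (fun σ => mag N σ ^ 2) =
      (∑ a, ∑ b, gibbs N k β e (fun σ => spin (σ a) * spin (σ b))) / (N : ℝ) ^ 2 := by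
  have hsq : ∀ σ : Fin N → Bool,
      mag N σ ^ 2 = (∑ a, ∑ b, spin (σ a) * spin (σ b)) / (N : ℝ) ^ 2 := fun σ => by
    rw [mag, div_pow, sq, sum_mul_sum]
  simp only [gibbs, hsq, ← mul_div_assoc, ← sum_div]
  rw [div_right_comm]
  congr 2
  simp_rw [mul_sum]
  rw [sum_comm]
  exact sum_congr rfl fun a _ => sum_comm

lemma sum_gibbs_mag_sq_le {β : ℝ} (hβ : 0 ≤ β) (hN : N ≠ 0) :
    (∑ e : Fin k → Fin N × Fin N, gibbs N k β e (fun σ => mag N σ ^ 2)) / (N : ℝ) ^ (2 * k) ≤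
      (∑ L ∈ range (k + 1), k.descFactorial L * (2 * Real.tanh β / N) ^ L) / N := by
  have hN' : (N : ℝ) ≠ 0 := Nat.cast_ne_zero.2 hN
  calc (∑ e : Fin k → Fin N × Fin N, gibbs N k β e (fun σ => mag N σ ^ 2)) / (N : ℝ) ^ (2 * k)
      ≤ (∑ e : Fin k → Fin N × Fin N, ∑ a, ∑ b, trailWeight (Real.tanh β) e a b) /
          (N : ℝ) ^ 2 / (N : ℝ) ^ (2 * k) := by
        simp_rw [gibbs_mag_sq, ← sum_div]
        gcongr
        exact gibbs_spin_mul_spin_le_trailWeight hβ _ _ _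
    _ = (∑ L ∈ range (k + 1), k.descFactorial L * (2 * Real.tanh β / N) ^ L) / N := by
        rw [sum_sum_sum_trailWeight, Fintype.card_fin, sum_div, sum_div, sum_div]
        refine sum_congr rfl fun L hL => ?_
        rw [pow_sub₀ _ (by positivity) (Nat.le_of_lt_succ (mem_range.1 hL)), div_pow]
        field_simp
        ring

end HighTemperatureExpansion

section Poisson

lemma poissonWeight_nonneg {ζ : ℝ} (hζ : 0 ≤ ζ) (k : ℕ) : 0 ≤ poissonWeight ζ k := by
  unfold poissonWeight
  positivity

/-- The `L`-th factorial moment of the Poisson law of mean `ζ` is `ζ ^ L`. -/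
lemma sum_range_poissonWeight_mul_descFactorial_le {ζ : ℝ} (hζ : 0 ≤ ζ) (L M : ℕ) :
    ∑ k ∈ range M, poissonWeight ζ k * k.descFactorial L ≤ ζ ^ L := by
  have hshift : ∀ j, poissonWeight ζ (L + j) * (L + j).descFactorial L =
      Real.exp (-ζ) * ζ ^ L * (ζ ^ j / j.factorial) := fun j => by
    have hfac : (j.factorial : ℝ) * (L + j).descFactorial L = (L + j).factorial := by
      exact_mod_cast (by simpa using Nat.factorial_mul_descFactorial (Nat.le_add_right L j))
    rw [poissonWeight, ← hfac, pow_add]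
    field_simp
  calc ∑ k ∈ range M, poissonWeight ζ k * k.descFactorial L
      ≤ ∑ k ∈ range (L + M), poissonWeight ζ k * k.descFactorial L :=
        sum_le_sum_of_subset_of_nonneg (range_subset_range.2 (Nat.le_add_left M L))
          fun k _ _ => mul_nonneg (poissonWeight_nonneg hζ k) (Nat.cast_nonneg _)
    _ = Real.exp (-ζ) * ζ ^ L * ∑ j ∈ range M, ζ ^ j / j.factorial := by
        rw [sum_range_add, sum_eq_zero fun k hk => by
          rw [Nat.descFactorial_eq_zero_iff_lt.2 (mem_range.1 hk), Nat.cast_zero, mul_zero],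
          zero_add, mul_sum]
        exact sum_congr rfl fun j _ => hshift j
    _ ≤ Real.exp (-ζ) * ζ ^ L * Real.exp ζ := by
        gcongr
        exact Real.sum_le_exp_of_nonneg hζ M
    _ = ζ ^ L := by rw [mul_right_comm, ← Real.exp_add, neg_add_cancel, Real.exp_zero, one_mul]

lemma sum_range_poissonWeight_mul_sum_descFactorial_le {ζ x : ℝ} (hζ : 0 ≤ ζ) (hx : 0 ≤ x)
    (hζx : ζ * x < 1) (M : ℕ) :
    ∑ k ∈ range M, poissonWeight ζ k * ∑ L ∈ range (k + 1), k.descFactorial L * x ^ L ≤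
      1 / (1 - ζ * x) := by
  calc ∑ k ∈ range M, poissonWeight ζ k * ∑ L ∈ range (k + 1), k.descFactorial L * x ^ L
      ≤ ∑ k ∈ range M, poissonWeight ζ k * ∑ L ∈ range M, k.descFactorial L * x ^ L := by
        gcongr with k hk
        · exact poissonWeight_nonneg hζ k
        · exact mem_range.1 hk
    _ = ∑ L ∈ range M, (∑ k ∈ range M, poissonWeight ζ k * k.descFactorial L) * x ^ L := by
        simp_rw [mul_sum, sum_mul]
        rw [sum_comm]
        exact sum_congr rfl fun L _ => sum_congr rfl fun k _ => by ring
    _ ≤ ∑ L ∈ range M, (ζ * x) ^ L := by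
        gcongr with L
        rw [mul_pow]
        gcongr
        exact sum_range_poissonWeight_mul_descFactorial_le hζ L M
    _ ≤ 1 / (1 - ζ * x) := by
        simpa using geom_sum_Ico_le_of_lt_one (m := 0) (n := M) (by positivity) hζx

end Poisson

end DiluteFerromagnet

open DiluteFerromagnet

/-- In the high temperature region `2 α tanh β < 1`, the quenched
Gibbs average of the squared magnetization, `⟨m²⟩ = 𝔼 Ω(σ_{i₀} σ_{j₀})` (where `i₀, j₀`
are independent uniform sites averaged by `𝔼`), is `O(1/N)`: there is a constant
`C = C(α,β)` with `⟨m²⟩ ≤ C / N` for all system sizes `N`. -/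
theorem magnetization_squared_order_one_over_N
    (α β : ℝ) (hα : 0 < α) (hβ : 0 ≤ β) (hHT : 2 * α * Real.tanh β < 1) :
    ∃ C : ℝ, ∀ N : ℕ, 1 ≤ N →
      qGibbs N α β (fun σ => (mag N σ) ^ 2)
        = quenchedExp N α (fun k e =>
            (∑ i₀ : Fin N, ∑ j₀ : Fin N,
              gibbs N k β e (fun σ => spin (σ i₀) * spin (σ j₀))) / (N : ℝ) ^ 2)
      ∧ qGibbs N α β (fun σ => (mag N σ) ^ 2) ≤ C / N := by
  refine ⟨1 / (1 - 2 * α * Real.tanh β), fun N hN => ⟨by simp only [qGibbs, gibbs_mag_sq], ?_⟩⟩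
  have hN0 : (N : ℝ) ≠ 0 := by positivity
  have hζ : 0 ≤ α * N := by positivity
  have hθ := tanh_nonneg hβ
  have hr : α * N * (2 * Real.tanh β / N) = 2 * α * Real.tanh β := by field_simp
  refine Real.tsum_le_of_sum_range_le (fun k => ?_) fun M => ?_
  · exact mul_nonneg (poissonWeight_nonneg hζ k)
      (div_nonneg (sum_nonneg fun e _ => gibbs_nonneg β e fun σ => sq_nonneg _) (by positivity))
  calc ∑ k ∈ range M, poissonWeight (α * N) k *
        ((∑ e : Fin k → Fin N × Fin N, gibbs N k β e (fun σ => mag N σ ^ 2)) / (N : ℝ) ^ (2 * k))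
      ≤ ∑ k ∈ range M, poissonWeight (α * N) k *
          (∑ L ∈ range (k + 1), k.descFactorial L * (2 * Real.tanh β / N) ^ L) / N :=
        sum_le_sum fun k _ => by
          rw [mul_div_assoc]
          exact mul_le_mul_of_nonneg_left (sum_gibbs_mag_sq_le hβ (by omega))
            (poissonWeight_nonneg hζ k)
    _ ≤ 1 / (1 - 2 * α * Real.tanh β) / N := by
        rw [← sum_div, ← hr]
        gcongr
        exact sum_range_poissonWeight_mul_sum_descFactorial_le hζ (by positivity) (hr ▸ hHT) M
end
end

section
/- In the high temperature region 2α·tanh(β) < 1, the derivative in α of the difference between the quenched pressure and the symmetric pressure is sandwiched as ⟨m²⟩·(ln 2)·tanh β ≤ ∂_α(A_N(α,β) − Ã_S(α,β)) ≤ ⟨m²⟩·tanh β, and in particular it is nonnegative. -/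
open Filter Topology Finset

noncomputable section

/-- The quenched pressure `A_N(α,β) = (1/N) 𝔼 ln Z_N(β)`. -/
def pressure (N : ℕ) (α β : ℝ) : ℝ :=
  (quenchedExp N α (fun k e => Real.log (partZ N k β e))) / N

/-!
Adding one uniformly random edge `(i, j)` to a realization multiplies `Z` by
`cosh β (1 + tanh β Ω(σ_i σ_j))`. Averaged over the edges, the expected `ln Z` with `k + 1` edges
therefore exceeds that with `k` edges by `ln cosh β + 𝔼 ln (1 + tanh β Ω(σ_i σ_j))`, and
differentiating the Poisson mixture in `α` produces exactly these increments, so that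
`∂_α (A_N - Ã_S) = 𝔼 ln (1 + tanh β Ω(σ_i σ_j))` with `(i, j)` a fresh uniform edge.
By Griffiths' inequality `x = tanh β Ω(σ_i σ_j)` lies in `[0, 1]`, where
`x ln 2 ≤ ln (1 + x) ≤ x`; and the average of `Ω(σ_i σ_j)` over `(i, j)` is `Ω(m²)`.
-/

open scoped Nat BigOperators

lemma Real.tanh_nonneg {x : ℝ} (hx : 0 ≤ x) : 0 ≤ Real.tanh x := by
  rw [Real.tanh_eq_sinh_div_cosh]
  exact div_nonneg (Real.sinh_nonneg_iff.2 hx) (Real.cosh_pos x).le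

lemma mul_log_two_le_log_one_add {x : ℝ} (h0 : 0 ≤ x) (h1 : x ≤ 1) :
    x * Real.log 2 ≤ Real.log (1 + x) := by
  have := strictConcaveOn_log_Ioi.concaveOn.2 (Set.mem_Ioi.2 one_pos)
    (Set.mem_Ioi.2 two_pos) (sub_nonneg.2 h1) h0 (sub_add_cancel 1 x)
  simp only [smul_eq_mul, Real.log_one, mul_zero, zero_add, mul_one] at this
  rwa [show 1 - x + x * 2 = 1 + x by ring] at this

lemma log_one_add_le {x : ℝ} (h : -1 < x) : Real.log (1 + x) ≤ x := by
  linarith [Real.log_le_sub_one_of_pos (by linarith : 0 < 1 + x)]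

lemma abs_le_mul_two_pow_of_abs_sub_le {L : ℕ → ℝ} {B : ℝ} (h : ∀ k, |L (k + 1) - L k| ≤ B)
    (k : ℕ) : |L k| ≤ (|L 0| + B) * 2 ^ k := by
  have hB : 0 ≤ B := (abs_nonneg _).trans (h 0)
  induction k with
  | zero => simpa using hB
  | succ k ih =>
    have h1 : (1 : ℝ) ≤ 2 ^ k := one_le_pow₀ one_le_two
    calc |L (k + 1)| ≤ |L k| + |L (k + 1) - L k| := by
          linarith [abs_sub_abs_le_abs_sub (L (k + 1)) (L k)]
      _ ≤ (|L 0| + B) * 2 ^ k + B := add_le_add ih (h k)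
      _ ≤ (|L 0| + B) * 2 ^ (k + 1) := by
          rw [pow_succ]
          nlinarith [abs_nonneg (L 0),
            mul_le_mul_of_nonneg_left h1 (add_nonneg (abs_nonneg (L 0)) hB)]

lemma Fintype.expect_fin_cons {X : Type*} [Fintype X] {k : ℕ} (F : (Fin (k + 1) → X) → ℝ) :
    𝔼 e, F e = 𝔼 p, 𝔼 e : Fin k → X, F (Fin.cons p e) := by
  rw [← Fintype.expect_equiv (Fin.consEquiv fun _ => X) (fun q => F (Fin.cons q.1 q.2)) F
    fun _ => rfl, ← Finset.univ_product_univ, Finset.expect_product]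

section ExponentialGeneratingFunction

variable {a : ℕ → ℝ} {C R : ℝ}

lemma summable_mul_pow_div_factorial (ha : ∀ k, |a k| ≤ C * R ^ k) (x : ℝ) :
    Summable fun k => a k * x ^ k / k ! := by
  refine .of_norm_bounded ((Real.summable_pow_div_factorial (R * |x|)).mul_left C) fun k => ?_
  rw [Real.norm_eq_abs, abs_div, abs_mul, abs_pow, Nat.abs_cast]
  calc |a k| * |x| ^ k / k ! ≤ C * R ^ k * |x| ^ k / k ! := by gcongr; exact ha k
    _ = C * ((R * |x|) ^ k / k !) := by rw [mul_pow]; ring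

lemma mul_succ_div_factorial_succ (k : ℕ) (c y : ℝ) :
    c * ((k + 1 : ℕ) * y) / (k + 1)! = c * y / k ! := by
  rw [Nat.factorial_succ, Nat.cast_mul]
  field_simp

lemma hasDerivAt_tsum_mul_pow_div_factorial (ha : ∀ k, |a k| ≤ C * R ^ k) (x : ℝ) :
    HasDerivAt (fun z => ∑' k, a k * z ^ k / k !) (∑' k, a (k + 1) * x ^ k / k !) x := by
  set ρ := |x| + 1
  have hderiv : ∀ k z,
      HasDerivAt (fun z => a k * z ^ k / k !) (a k * (k * z ^ (k - 1)) / k !) z :=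
    fun k z => ((hasDerivAt_pow k z).const_mul (a k)).div_const _
  have hu : Summable fun k => C * R ^ k * (k * ρ ^ (k - 1)) / k ! := by
    refine (summable_nat_add_iff 1).1 <|
      ((Real.summable_pow_div_factorial (R * ρ)).mul_left (C * R)).congr fun k => ?_
    rw [Nat.add_sub_cancel, mul_succ_div_factorial_succ, pow_succ, mul_pow]
    ring
  have hbound : ∀ k, ∀ z ∈ Set.Ioo (-ρ) ρ,
      ‖a k * (k * z ^ (k - 1)) / (k ! : ℝ)‖ ≤ C * R ^ k * (k * ρ ^ (k - 1)) / k ! := by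
    intro k z hz
    rw [Real.norm_eq_abs, abs_div, abs_mul, abs_mul, abs_pow, Nat.abs_cast, Nat.abs_cast]
    gcongr
    · exact (abs_nonneg _).trans (ha k)
    · exact ha k
    · exact (abs_lt.2 hz).le
  have hx : x ∈ Set.Ioo (-ρ) ρ := abs_lt.1 (lt_add_one _)
  have h := hasDerivAt_tsum_of_isPreconnected hu isOpen_Ioo isPreconnected_Ioo
    (fun k z _ => hderiv k z) hbound hx (summable_mul_pow_div_factorial ha x) hx
  rw [(Summable.of_norm_bounded hu fun k => hbound k x hx).tsum_eq_zero_add] at h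
  simpa only [Nat.cast_zero, zero_mul, mul_zero, zero_div, zero_add, Nat.add_sub_cancel,
    mul_succ_div_factorial_succ] using h

end ExponentialGeneratingFunction

section Poisson

lemma poissonWeight_nonneg {ζ : ℝ} (hζ : 0 ≤ ζ) (k : ℕ) : 0 ≤ poissonWeight ζ k := by
  unfold poissonWeight
  positivity

lemma poissonWeight_eq (ζ : ℝ) (k : ℕ) : poissonWeight ζ k = Real.exp (-ζ) * (ζ ^ k / k !) :=
  mul_div_assoc _ _ _

lemma tsum_poissonWeight_mul (L : ℕ → ℝ) (ζ : ℝ) :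
    ∑' k, poissonWeight ζ k * L k = Real.exp (-ζ) * ∑' k, L k * ζ ^ k / k ! := by
  rw [← tsum_mul_left]
  exact tsum_congr fun k => by rw [poissonWeight_eq]; ring

lemma tsum_poissonWeight (ζ : ℝ) : ∑' k, poissonWeight ζ k = 1 := by
  have hexp : ∑' k, ζ ^ k / k ! = Real.exp ζ := by
    rw [Real.exp_eq_exp_ℝ, NormedSpace.exp_eq_tsum_div]
  simpa [hexp, ← Real.exp_add] using tsum_poissonWeight_mul 1 ζ

variable {L : ℕ → ℝ} {C R : ℝ}

lemma summable_poissonWeight_mul (hL : ∀ k, |L k| ≤ C * R ^ k) (ζ : ℝ) :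
    Summable fun k => poissonWeight ζ k * L k :=
  ((summable_mul_pow_div_factorial hL ζ).mul_left (Real.exp (-ζ))).congr fun k => by
    rw [poissonWeight_eq]
    ring

lemma summable_poissonWeight_mul_of_abs_le {B : ℝ} (hL : ∀ k, |L k| ≤ B) (ζ : ℝ) :
    Summable fun k => poissonWeight ζ k * L k :=
  summable_poissonWeight_mul (C := B) (R := 1) (by simpa using hL) ζ

/-- Writing the mixture as `e^{-ζ} ∑ L_k ζ^k / k!`, differentiation shifts the coefficients. -/
lemma hasDerivAt_tsum_poissonWeight_mul (hL : ∀ k, |L k| ≤ C * R ^ k) (ζ : ℝ) :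
    HasDerivAt (fun z => ∑' k, poissonWeight z k * L k)
      (∑' k, poissonWeight ζ k * (L (k + 1) - L k)) ζ := by
  have hL' : ∀ k, |L (k + 1)| ≤ C * R * R ^ k := fun k => by
    rw [mul_assoc, ← pow_succ']
    exact hL _
  have h := (hasDerivAt_neg ζ).exp.mul (hasDerivAt_tsum_mul_pow_div_factorial hL ζ)
  rw [funext (tsum_poissonWeight_mul L)]
  simp_rw [mul_sub, Summable.tsum_sub (summable_poissonWeight_mul hL' ζ)
    (summable_poissonWeight_mul hL ζ), tsum_poissonWeight_mul]
  exact h.congr_deriv (by ring)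

lemma tsum_poissonWeight_mul_mem_Icc {ζ : ℝ} (hζ : 0 ≤ ζ) {M I : ℕ → ℝ} {B c c' : ℝ}
    (hM : ∀ k, |M k| ≤ B) (h0 : ∀ k, 0 ≤ c * M k) (hlow : ∀ k, c * M k ≤ I k)
    (hup : ∀ k, I k ≤ c' * M k) :
    ∑' k, poissonWeight ζ k * I k ∈
      Set.Icc (c * ∑' k, poissonWeight ζ k * M k) (c' * ∑' k, poissonWeight ζ k * M k) := by
  have hπ := poissonWeight_nonneg hζ
  have hsM := summable_poissonWeight_mul_of_abs_le hM ζ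
  have hsI : Summable fun k => poissonWeight ζ k * I k :=
    .of_nonneg_of_le (fun k => mul_nonneg (hπ k) ((h0 k).trans (hlow k)))
      (fun k => mul_le_mul_of_nonneg_left (hup k) (hπ k))
      ((hsM.mul_left c').congr fun k => by ring)
  rw [← tsum_mul_left, ← tsum_mul_left]
  refine ⟨(hsM.mul_left c).tsum_le_tsum (fun k => ?_) hsI,
    hsI.tsum_le_tsum (fun k => ?_) (hsM.mul_left c')⟩
  · rw [mul_left_comm]
    exact mul_le_mul_of_nonneg_left (hlow k) (hπ k)
  · rw [mul_left_comm]
    exact mul_le_mul_of_nonneg_left (hup k) (hπ k)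

end Poisson

section SpinMonomial

variable {V : Type*}

def spinMonomial (s : Multiset V) (σ : V → Bool) : ℝ := (s.map fun i => spin (σ i)).prod

lemma spinMonomial_add (s t : Multiset V) (σ : V → Bool) :
    spinMonomial (s + t) σ = spinMonomial s σ * spinMonomial t σ := by
  simp only [spinMonomial, Multiset.map_add, Multiset.prod_add]

lemma spinMonomial_pair (i j : V) (σ : V → Bool) :
    spinMonomial {i, j} σ = spin (σ i) * spin (σ j) := by
  simp [spinMonomial]

lemma prod_spinMonomial {ι : Type*} (T : Finset ι) (s : ι → Multiset V) (σ : V → Bool) :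
    ∏ ν ∈ T, spinMonomial (s ν) σ = spinMonomial (∑ ν ∈ T, s ν) σ := by
  classical
  induction T using Finset.induction_on with
  | empty => simp [spinMonomial]
  | insert ν T hν ih => rw [prod_insert hν, sum_insert hν, ih, spinMonomial_add]

variable [Fintype V] [DecidableEq V]

lemma spinMonomial_eq_prod_pow_count (s : Multiset V) (σ : V → Bool) :
    spinMonomial s σ = ∏ i, spin (σ i) ^ s.count i := by
  rw [spinMonomial, Finset.prod_multiset_map_count]
  exact Finset.prod_subset (Finset.subset_univ _) fun i _ hi => by
    rw [Multiset.count_eq_zero_of_notMem (by simpa using hi), pow_zero]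

lemma sum_spinMonomial (s : Multiset V) :
    ∑ σ : V → Bool, spinMonomial s σ = ∏ i, (1 + (-1) ^ s.count i) := by
  simp_rw [spinMonomial_eq_prod_pow_count]
  rw [← Fintype.prod_sum fun i (b : Bool) => spin b ^ s.count i]
  simp [spin]

lemma sum_spinMonomial_nonneg (s : Multiset V) : 0 ≤ ∑ σ : V → Bool, spinMonomial s σ := by
  rw [sum_spinMonomial]
  refine Finset.prod_nonneg fun i _ => ?_
  rcases neg_one_pow_eq_or ℝ (s.count i) with h | h <;> rw [h] <;> norm_num

end SpinMonomial

lemma exp_mul_spin_mul_spin (β : ℝ) (a b : Bool) :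
    Real.exp (β * (spin a * spin b)) = Real.cosh β + Real.sinh β * (spin a * spin b) := by
  cases a <;> cases b <;> simp [spin, ← Real.cosh_sub_sinh, Real.cosh_add_sinh, sub_eq_add_neg]

lemma exp_neg_mul_ham (N k : ℕ) (β : ℝ) (e : Fin k → Fin N × Fin N) (σ : Fin N → Bool) :
    Real.exp (-β * ham N k e σ) = ∑ T : Finset (Fin k),
      Real.sinh β ^ T.card * Real.cosh β ^ Tᶜ.card *
        spinMonomial (∑ ν ∈ T, {(e ν).1, (e ν).2}) σ := by
  rw [ham, neg_mul_neg, Finset.mul_sum, Real.exp_sum]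
  simp_rw [exp_mul_spin_mul_spin, ← spinMonomial_pair, add_comm (Real.cosh β), Fintype.prod_add,
    prod_mul_distrib, prod_const, prod_spinMonomial]
  exact Finset.sum_congr rfl fun T _ => by ring

/-- Griffiths' first inequality. -/
lemma sum_exp_neg_mul_ham_mul_spinMonomial_nonneg (N k : ℕ) {β : ℝ} (hβ : 0 ≤ β)
    (e : Fin k → Fin N × Fin N) (s : Multiset (Fin N)) :
    0 ≤ ∑ σ, Real.exp (-β * ham N k e σ) * spinMonomial s σ := by
  simp_rw [exp_neg_mul_ham, Finset.sum_mul, mul_assoc, ← spinMonomial_add]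
  rw [Finset.sum_comm]
  refine Finset.sum_nonneg fun T _ => ?_
  simp_rw [← Finset.mul_sum]
  have hsinh : 0 ≤ Real.sinh β := Real.sinh_nonneg_iff.2 hβ
  exact mul_nonneg (by positivity) (mul_nonneg (by positivity) (sum_spinMonomial_nonneg _))

lemma partZ_pos (N k : ℕ) (β : ℝ) (e : Fin k → Fin N × Fin N) : 0 < partZ N k β e :=
  Finset.sum_pos (fun _ _ => Real.exp_pos _) univ_nonempty

lemma gibbs_le_one {N k : ℕ} {β : ℝ} {e : Fin k → Fin N × Fin N}
    {O : (Fin N → Bool) → ℝ} (hO : ∀ σ, O σ ≤ 1) : gibbs N k β e O ≤ 1 := by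
  rw [gibbs, div_le_one (partZ_pos N k β e), partZ]
  exact Finset.sum_le_sum fun σ _ => mul_le_of_le_one_right (Real.exp_pos _).le (hO σ)

lemma gibbs_expect {N k : ℕ} {β : ℝ} {e : Fin k → Fin N × Fin N} {ι : Type*} [Fintype ι]
    (O : ι → (Fin N → Bool) → ℝ) :
    gibbs N k β e (fun σ => 𝔼 i, O i σ) = 𝔼 i, gibbs N k β e (O i) := by
  simp_rw [gibbs, Finset.mul_expect, ← Finset.expect_sum_comm, Finset.expect_div]

def pairCorr (N k : ℕ) (β : ℝ) (e : Fin k → Fin N × Fin N) (p : Fin N × Fin N) : ℝ :=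
  gibbs N k β e (fun σ => spin (σ p.1) * spin (σ p.2))

lemma pairCorr_nonneg (N k : ℕ) {β : ℝ} (hβ : 0 ≤ β) (e : Fin k → Fin N × Fin N)
    (p : Fin N × Fin N) : 0 ≤ pairCorr N k β e p := by
  refine div_nonneg ?_ (partZ_pos N k β e).le
  simp_rw [← spinMonomial_pair]
  exact sum_exp_neg_mul_ham_mul_spinMonomial_nonneg N k hβ e _

lemma spin_mul_spin_le_one (a b : Bool) : spin a * spin b ≤ 1 := by
  cases a <;> cases b <;> norm_num [spin]

lemma pairCorr_le_one (N k : ℕ) (β : ℝ) (e : Fin k → Fin N × Fin N) (p : Fin N × Fin N) :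
    pairCorr N k β e p ≤ 1 :=
  gibbs_le_one fun _ => spin_mul_spin_le_one _ _

lemma mag_sq (N : ℕ) (σ : Fin N → Bool) :
    mag N σ ^ 2 = 𝔼 p : Fin N × Fin N, spin (σ p.1) * spin (σ p.2) := by
  have hmag : mag N σ = 𝔼 i, spin (σ i) := by
    rw [Fintype.expect_eq_sum_div_card, Fintype.card_fin, mag]
  rw [hmag, sq, Finset.expect_mul_expect, ← Finset.expect_product', Finset.univ_product_univ]

lemma gibbs_mag_sq (N k : ℕ) (β : ℝ) (e : Fin k → Fin N × Fin N) :
    gibbs N k β e (fun σ => mag N σ ^ 2) = 𝔼 p, pairCorr N k β e p := by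
  simp_rw [mag_sq]
  exact gibbs_expect _

lemma partZ_cons (N k : ℕ) (β : ℝ) (e : Fin k → Fin N × Fin N) (p : Fin N × Fin N) :
    partZ N (k + 1) β (Fin.cons p e) =
      partZ N k β e * Real.cosh β * (1 + Real.tanh β * pairCorr N k β e p) := by
  have hweight : ∀ σ : Fin N → Bool, Real.exp (-β * ham N (k + 1) (Fin.cons p e) σ) =
      Real.exp (-β * ham N k e σ) * Real.cosh β +
        Real.sinh β * (Real.exp (-β * ham N k e σ) * (spin (σ p.1) * spin (σ p.2))) := by
    intro σ
    rw [ham, Fin.sum_univ_succ, Fin.cons_zero, neg_add, mul_add, neg_mul_neg, Real.exp_add,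
      exp_mul_spin_mul_spin, ← ham]
    simp only [Fin.cons_succ]
    ring
  have hcorr : ∑ σ, Real.exp (-β * ham N k e σ) * (spin (σ p.1) * spin (σ p.2)) =
      partZ N k β e * pairCorr N k β e p := by
    rw [pairCorr, gibbs, mul_div_cancel₀ _ (partZ_pos N k β e).ne']
  rw [partZ, Finset.sum_congr rfl fun σ _ => hweight σ, Finset.sum_add_distrib,
    ← Finset.sum_mul, ← Finset.mul_sum, ← partZ, hcorr, Real.tanh_eq_sinh_div_cosh]
  field_simp [(Real.cosh_pos β).ne']

lemma one_add_tanh_mul_pairCorr_pos (N k : ℕ) {β : ℝ} (hβ : 0 ≤ β) (e : Fin k → Fin N × Fin N)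
    (p : Fin N × Fin N) : 0 < 1 + Real.tanh β * pairCorr N k β e p := by
  have := mul_nonneg (Real.tanh_nonneg hβ) (pairCorr_nonneg N k hβ e p)
  linarith

lemma log_partZ_cons (N k : ℕ) {β : ℝ} (hβ : 0 ≤ β) (e : Fin k → Fin N × Fin N)
    (p : Fin N × Fin N) :
    Real.log (partZ N (k + 1) β (Fin.cons p e)) = Real.log (partZ N k β e) +
      Real.log (Real.cosh β) + Real.log (1 + Real.tanh β * pairCorr N k β e p) := by
  rw [partZ_cons, Real.log_mul (by positivity [partZ_pos N k β e])
    (one_add_tanh_mul_pairCorr_pos N k hβ e p).ne', Real.log_mul (partZ_pos N k β e).ne'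
    (Real.cosh_pos β).ne']

lemma quenchedExp_eq_tsum_expect (N : ℕ) (α : ℝ) (F : (k : ℕ) → (Fin k → Fin N × Fin N) → ℝ) :
    quenchedExp N α F = ∑' k, poissonWeight (α * N) k * 𝔼 e, F k e := by
  unfold quenchedExp
  congr! 2 with k
  rw [Fintype.expect_eq_sum_div_card]
  simp [pow_mul, sq]

def meanLogPartZ (N k : ℕ) (β : ℝ) : ℝ :=
  𝔼 e : Fin k → Fin N × Fin N, Real.log (partZ N k β e)

def meanGibbsMagSq (N k : ℕ) (β : ℝ) : ℝ :=
  𝔼 e : Fin k → Fin N × Fin N, gibbs N k β e (fun σ => mag N σ ^ 2)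

lemma pressure_eq_tsum (N : ℕ) (α β : ℝ) :
    pressure N α β = (∑' k, poissonWeight (α * N) k * meanLogPartZ N k β) / N := by
  rw [pressure, quenchedExp_eq_tsum_expect]
  rfl

lemma qGibbs_mag_sq_eq_tsum (N : ℕ) (α β : ℝ) :
    qGibbs N α β (fun σ => mag N σ ^ 2) = ∑' k, poissonWeight (α * N) k * meanGibbsMagSq N k β :=
  quenchedExp_eq_tsum_expect _ _ _

lemma meanGibbsMagSq_eq (N k : ℕ) (β : ℝ) :
    meanGibbsMagSq N k β = 𝔼 p, 𝔼 e : Fin k → Fin N × Fin N, pairCorr N k β e p := by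
  simp_rw [meanGibbsMagSq, gibbs_mag_sq]
  exact Finset.expect_comm _ _ _

lemma meanGibbsMagSq_nonneg (N k : ℕ) {β : ℝ} (hβ : 0 ≤ β) : 0 ≤ meanGibbsMagSq N k β := by
  rw [meanGibbsMagSq_eq]
  exact Finset.expect_nonneg fun p _ => Finset.expect_nonneg fun e _ => pairCorr_nonneg N k hβ e p

lemma meanGibbsMagSq_le_one {N : ℕ} (hN : 1 ≤ N) (k : ℕ) (β : ℝ) : meanGibbsMagSq N k β ≤ 1 := by
  have : Nonempty (Fin N) := ⟨⟨0, hN⟩⟩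
  rw [meanGibbsMagSq_eq]
  exact Finset.expect_le univ_nonempty fun p _ =>
    Finset.expect_le univ_nonempty fun e _ => pairCorr_le_one N k β e p

lemma meanLogPartZ_succ {N : ℕ} (hN : 1 ≤ N) (k : ℕ) {β : ℝ} (hβ : 0 ≤ β) :
    meanLogPartZ N (k + 1) β = meanLogPartZ N k β + Real.log (Real.cosh β) +
      𝔼 p, 𝔼 e : Fin k → Fin N × Fin N, Real.log (1 + Real.tanh β * pairCorr N k β e p) := by
  have : Nonempty (Fin N) := ⟨⟨0, hN⟩⟩
  simp_rw [meanLogPartZ, Fintype.expect_fin_cons, log_partZ_cons N k hβ,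
    Finset.expect_add_distrib, Fintype.expect_const]

lemma log_two_mul_tanh_mul_meanGibbsMagSq_le {N : ℕ} (hN : 1 ≤ N) (k : ℕ) {β : ℝ} (hβ : 0 ≤ β) :
    Real.log 2 * Real.tanh β * meanGibbsMagSq N k β ≤
      meanLogPartZ N (k + 1) β - meanLogPartZ N k β - Real.log (Real.cosh β) := by
  rw [meanLogPartZ_succ hN k hβ, meanGibbsMagSq_eq, add_assoc, add_sub_cancel_left,
    add_sub_cancel_left]
  simp_rw [Finset.mul_expect]
  refine Finset.expect_le_expect fun p _ => Finset.expect_le_expect fun e _ => ?_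
  have hω := pairCorr_nonneg N k hβ e p
  calc Real.log 2 * Real.tanh β * pairCorr N k β e p
      = Real.tanh β * pairCorr N k β e p * Real.log 2 := by ring
    _ ≤ _ := mul_log_two_le_log_one_add (mul_nonneg (Real.tanh_nonneg hβ) hω)
      (mul_le_one₀ (Real.tanh_lt_one β).le hω (pairCorr_le_one N k β e p))

lemma meanLogPartZ_succ_sub_le {N : ℕ} (hN : 1 ≤ N) (k : ℕ) {β : ℝ} (hβ : 0 ≤ β) :
    meanLogPartZ N (k + 1) β - meanLogPartZ N k β - Real.log (Real.cosh β) ≤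
      Real.tanh β * meanGibbsMagSq N k β := by
  rw [meanLogPartZ_succ hN k hβ, meanGibbsMagSq_eq, add_assoc, add_sub_cancel_left,
    add_sub_cancel_left]
  simp_rw [Finset.mul_expect]
  refine Finset.expect_le_expect fun p _ => Finset.expect_le_expect fun e _ => ?_
  have := mul_nonneg (Real.tanh_nonneg hβ) (pairCorr_nonneg N k hβ e p)
  exact log_one_add_le (by linarith)

lemma abs_meanLogPartZ_succ_sub_le {N : ℕ} (hN : 1 ≤ N) (k : ℕ) {β : ℝ} (hβ : 0 ≤ β) :
    |meanLogPartZ N (k + 1) β - meanLogPartZ N k β| ≤ Real.log (Real.cosh β) + 1 := by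
  have hlow := log_two_mul_tanh_mul_meanGibbsMagSq_le hN k hβ
  have hup := meanLogPartZ_succ_sub_le hN k hβ
  have hcosh : 0 ≤ Real.log (Real.cosh β) := Real.log_nonneg (Real.one_le_cosh β)
  have hM : 0 ≤ Real.log 2 * Real.tanh β * meanGibbsMagSq N k β :=
    mul_nonneg (mul_nonneg (Real.log_nonneg one_le_two) (Real.tanh_nonneg hβ))
      (meanGibbsMagSq_nonneg N k hβ)
  have hM' : Real.tanh β * meanGibbsMagSq N k β ≤ 1 :=
    mul_le_one₀ (Real.tanh_lt_one β).le (meanGibbsMagSq_nonneg N k hβ)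
      (meanGibbsMagSq_le_one hN k β)
  rw [abs_le]
  constructor <;> linarith

lemma hasDerivAt_pressure {N : ℕ} (hN : 1 ≤ N) {β : ℝ} (hβ : 0 ≤ β) (α : ℝ) :
    HasDerivAt (fun a => pressure N a β)
      (∑' k, poissonWeight (α * N) k * (meanLogPartZ N (k + 1) β - meanLogPartZ N k β)) α := by
  have hN' : (N : ℝ) ≠ 0 := by positivity
  have hG := hasDerivAt_tsum_poissonWeight_mul (abs_le_mul_two_pow_of_abs_sub_le
    (L := fun k => meanLogPartZ N k β) fun k => abs_meanLogPartZ_succ_sub_le hN k hβ) (α * N)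
  have h := (hG.comp α (hasDerivAt_mul_const (N : ℝ))).div_const N
  simp_rw [pressure_eq_tsum]
  exact h.congr_deriv (mul_div_cancel_right₀ _ hN')

lemma hasDerivAt_pressure_sub_symmetric {N : ℕ} (hN : 1 ≤ N) {β : ℝ} (hβ : 0 ≤ β) (α : ℝ) :
    HasDerivAt (fun a => pressure N a β - (Real.log 2 + a * Real.log (Real.cosh β)))
      (∑' k, poissonWeight (α * N) k * (meanLogPartZ N (k + 1) β - meanLogPartZ N k β -
        Real.log (Real.cosh β))) α := by
  have h := (hasDerivAt_pressure hN hβ α).sub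
    ((hasDerivAt_mul_const (Real.log (Real.cosh β))).const_add (Real.log 2))
  refine h.congr_deriv ?_
  rw [tsum_congr fun k => mul_sub (poissonWeight (α * N) k) _ (Real.log (Real.cosh β)),
    Summable.tsum_sub (summable_poissonWeight_mul_of_abs_le
      (fun k => abs_meanLogPartZ_succ_sub_le hN k hβ) _)
    (summable_poissonWeight_mul_of_abs_le (fun _ => le_rfl) _), tsum_mul_right,
    tsum_poissonWeight, one_mul]

theorem pressure_diff_derivative_sandwich_general
    (N : ℕ) (hN : 1 ≤ N) (α β : ℝ) (hα : 0 < α) (hβ : 0 ≤ β) (d : ℝ)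
    (hd : HasDerivAt
      (fun a : ℝ => pressure N a β - (Real.log 2 + a * Real.log (Real.cosh β))) d α) :
    qGibbs N α β (fun σ => (mag N σ) ^ 2) * Real.log 2 * Real.tanh β ≤ d
    ∧ d ≤ qGibbs N α β (fun σ => (mag N σ) ^ 2) * Real.tanh β
    ∧ 0 ≤ d := by
  have hM : ∀ k, 0 ≤ meanGibbsMagSq N k β := fun k => meanGibbsMagSq_nonneg N k hβ
  have hc : 0 ≤ Real.log 2 * Real.tanh β :=
    mul_nonneg (Real.log_nonneg one_le_two) (Real.tanh_nonneg hβ)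
  obtain ⟨hlow, hup⟩ := tsum_poissonWeight_mul_mem_Icc (ζ := α * N) (by positivity)
    (fun k => abs_le.2 ⟨by linarith [hM k], meanGibbsMagSq_le_one hN k β⟩)
    (fun k => mul_nonneg hc (hM k)) (fun k => log_two_mul_tanh_mul_meanGibbsMagSq_le hN k hβ)
    (fun k => meanLogPartZ_succ_sub_le hN k hβ)
  have hq : 0 ≤ ∑' k, poissonWeight (α * N) k * meanGibbsMagSq N k β :=
    tsum_nonneg fun k => mul_nonneg (poissonWeight_nonneg (by positivity) k) (hM k)
  rw [qGibbs_mag_sq_eq_tsum, hd.unique (hasDerivAt_pressure_sub_symmetric hN hβ α)]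
  refine ⟨by linarith, by linarith, by nlinarith⟩

/-- In the high temperature region `2 α tanh β < 1`, the derivative in
`α` of the difference between the quenched pressure and the symmetric pressure
`Ã_S(α,β) = ln 2 + α ln cosh β` is sandwiched as
`⟨m²⟩ (ln 2) tanh β ≤ ∂_α(A_N − Ã_S) ≤ ⟨m²⟩ tanh β`, and in particular it is nonnegative. -/
theorem pressure_diff_derivative_sandwich
    (N : ℕ) (hN : 1 ≤ N) (α β : ℝ) (hα : 0 < α) (hβ : 0 ≤ β)
    (hHT : 2 * α * Real.tanh β < 1) (d : ℝ)
    (hd : HasDerivAt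
      (fun a : ℝ => pressure N a β - (Real.log 2 + a * Real.log (Real.cosh β))) d α) :
    qGibbs N α β (fun σ => (mag N σ) ^ 2) * Real.log 2 * Real.tanh β ≤ d
    ∧ d ≤ qGibbs N α β (fun σ => (mag N σ) ^ 2) * Real.tanh β
    ∧ 0 ≤ d :=
  pressure_diff_derivative_sandwich_general N hN α β hα hβ d hd
end
end

section
/- For every 0 < λ₀ < 1 and every N ≥ 1, the Curie–Weiss pressure at inverse temperature λ₀ satisfies the finite-size bound (1/N) ln Σ_{σ ∈ {−1,+1}^N} exp(λ₀ N m(σ)²/2) ≤ ln 2 + (1/N)·(½ ln(1/(1−λ₀)) + 1); in particular it equals ln 2 + O(1/N). -/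
open Finset

noncomputable section

/-!
Hubbard–Stratonovich: `exp (κ S² / 2)` is the average of `exp (S x)` over a centred Gaussian `x`
of variance `κ`. This linearises the interaction in the total spin `S`, so the sum over
configurations factorises into `(2 cosh x) ^ N ≤ 2 ^ N exp (N x² / 2)`. What is left is a
Gaussian integral of variance `κ / (1 - κ N)`, which costs the factor `(1 - κ N) ^ (-1/2)`; with
`κ = λ₀ / N` the partition function is at most `2 ^ N (1 - λ₀) ^ (-1/2)`.
-/

open Real MeasureTheory

lemma neg_mul_sq_add_mul_eq {b : ℝ} (hb : b ≠ 0) (a x : ℝ) :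
    -b * x ^ 2 + a * x = a ^ 2 / (4 * b) + -b * (x - a / (2 * b)) ^ 2 := by
  field_simp
  ring

lemma integrable_exp_neg_mul_sq_add_mul {b : ℝ} (hb : 0 < b) (a : ℝ) :
    Integrable fun x : ℝ => exp (-b * x ^ 2 + a * x) := by
  simp_rw [neg_mul_sq_add_mul_eq hb.ne', exp_add]
  exact ((integrable_exp_neg_mul_sq hb).comp_sub_right _).const_mul _

lemma integral_exp_neg_mul_sq_add_mul {b : ℝ} (hb : 0 < b) (a : ℝ) :
    ∫ x : ℝ, exp (-b * x ^ 2 + a * x) = sqrt (π / b) * exp (a ^ 2 / (4 * b)) := by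
  simp_rw [neg_mul_sq_add_mul_eq hb.ne', exp_add, integral_const_mul,
    integral_sub_right_eq_self (fun y => exp (-b * y ^ 2)), integral_gaussian, mul_comm]

lemma sum_exp_mul_sum_spin (N : ℕ) (t : ℝ) :
    ∑ σ : Fin N → Bool, exp (t * ∑ i, spin (σ i)) = (2 * cosh t) ^ N := by
  calc ∑ σ : Fin N → Bool, exp (t * ∑ i, spin (σ i))
      = ∑ σ : Fin N → Bool, ∏ i, exp (t * spin (σ i)) := by simp_rw [mul_sum, exp_sum]
    _ = (∑ b : Bool, exp (t * spin b)) ^ N := (Fintype.sum_pow (fun b => exp (t * spin b)) N).symm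
    _ = (2 * cosh t) ^ N := by simp [spin, cosh_eq]; ring

lemma sum_exp_mul_sum_spin_le (N : ℕ) (t : ℝ) :
    ∑ σ : Fin N → Bool, exp (t * ∑ i, spin (σ i)) ≤ 2 ^ N * exp (N * (t ^ 2 / 2)) := by
  rw [sum_exp_mul_sum_spin, mul_pow, exp_nat_mul]
  gcongr
  exact cosh_le_exp_half_sq t

lemma sum_exp_neg_mul_sq_add_mul_sum_spin_le (N : ℕ) (b x : ℝ) :
    ∑ σ : Fin N → Bool, exp (-b * x ^ 2 + (∑ i, spin (σ i)) * x)
      ≤ 2 ^ N * exp (-(b - N / 2) * x ^ 2) := by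
  calc ∑ σ : Fin N → Bool, exp (-b * x ^ 2 + (∑ i, spin (σ i)) * x)
      = exp (-b * x ^ 2) * ∑ σ : Fin N → Bool, exp (x * ∑ i, spin (σ i)) := by
        rw [mul_sum]
        exact sum_congr rfl fun σ _ => by rw [← exp_add, mul_comm x]
    _ ≤ exp (-b * x ^ 2) * (2 ^ N * exp (N * (x ^ 2 / 2))) := by
        gcongr
        exact sum_exp_mul_sum_spin_le N x
    _ = 2 ^ N * exp (-(b - N / 2) * x ^ 2) := by
        rw [mul_left_comm, ← exp_add]
        ring_nf

theorem sum_exp_mul_sq_sum_spin_le {N : ℕ} {κ : ℝ} (hκ : 0 < κ) (hκN : κ * N < 1) :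
    ∑ σ : Fin N → Bool, exp (κ * (∑ i, spin (σ i)) ^ 2 / 2)
      ≤ 2 ^ N * sqrt (1 / (1 - κ * N)) := by
  obtain ⟨b, hb, hbκ⟩ : ∃ b : ℝ, 0 < b ∧ 2 * κ * b = 1 :=
    ⟨(2 * κ)⁻¹, by positivity, mul_inv_cancel₀ (by positivity)⟩
  have hc_eq : b - N / 2 = (1 - κ * N) / (2 * κ) := by
    field_simp
    linear_combination hbκ
  have h1κN : 0 < 1 - κ * N := by linarith
  have hc : 0 < b - N / 2 := by rw [hc_eq]; positivity
  have hrep (s : ℝ) : exp (κ * s ^ 2 / 2) = (sqrt (π / b))⁻¹ * ∫ x, exp (-b * x ^ 2 + s * x) := by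
    rw [integral_exp_neg_mul_sq_add_mul hb, inv_mul_cancel_left₀ (by positivity)]
    congr 1
    field_simp
    linear_combination 2 * s ^ 2 * hbκ
  calc ∑ σ : Fin N → Bool, exp (κ * (∑ i, spin (σ i)) ^ 2 / 2)
      = (sqrt (π / b))⁻¹ * ∫ x, ∑ σ : Fin N → Bool, exp (-b * x ^ 2 + (∑ i, spin (σ i)) * x) := by
        rw [integral_finsetSum _ fun σ _ => integrable_exp_neg_mul_sq_add_mul hb _, mul_sum]
        simp_rw [hrep]
    _ ≤ (sqrt (π / b))⁻¹ * ∫ x, 2 ^ N * exp (-(b - N / 2) * x ^ 2) := by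
        refine mul_le_mul_of_nonneg_left (integral_mono ?_ ?_ ?_) (by positivity)
        · exact integrable_finsetSum _ fun σ _ => integrable_exp_neg_mul_sq_add_mul hb _
        · exact (integrable_exp_neg_mul_sq hc).const_mul _
        · exact sum_exp_neg_mul_sq_add_mul_sum_spin_le N b
    _ = 2 ^ N * sqrt (1 / (1 - κ * N)) := by
        rw [integral_const_mul, integral_gaussian, mul_left_comm, ← sqrt_inv,
          ← sqrt_mul (by positivity), hc_eq]
        congr 2
        field_simp
        linear_combination hbκ

/-- For every `0 < λ₀ < 1` and every `N ≥ 1`, the Curie–Weiss pressure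
at inverse temperature `λ₀` satisfies the finite-size bound
`(1/N) ln ∑_σ exp(λ₀ N m(σ)²/2) ≤ ln 2 + (1/N)(½ ln(1/(1−λ₀)) + 1)`;
in particular it equals `ln 2 + O(1/N)`. -/
theorem curieWeiss_pressure_finite_size_bound
    (N : ℕ) (hN : 1 ≤ N) (lam₀ : ℝ) (h0 : 0 < lam₀) (h1 : lam₀ < 1) :
    (Real.log (∑ σ : Fin N → Bool, Real.exp (lam₀ * N * (mag N σ) ^ 2 / 2))) / N
      ≤ Real.log 2 + (1 / N) * (Real.log (1 / (1 - lam₀)) / 2 + 1) := by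
  have hN₀ : (0 : ℝ) < N := by exact_mod_cast hN
  have hZ : ∑ σ : Fin N → Bool, exp (lam₀ * N * (mag N σ) ^ 2 / 2)
      ≤ 2 ^ N * sqrt (1 / (1 - lam₀)) := by
    have hκN : lam₀ / N * N = lam₀ := div_mul_cancel₀ _ hN₀.ne'
    convert sum_exp_mul_sq_sum_spin_le (N := N) (div_pos h0 hN₀) (hκN.trans_lt h1) using 3
    · rw [mag]
      field_simp
    · rw [hκN]
  have hlogZ : log (∑ σ : Fin N → Bool, exp (lam₀ * N * (mag N σ) ^ 2 / 2))
      ≤ N * log 2 + log (1 / (1 - lam₀)) / 2 := by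
    calc _ ≤ log (2 ^ N * sqrt (1 / (1 - lam₀))) := log_le_log (by positivity) hZ
      _ = N * log 2 + log (1 / (1 - lam₀)) / 2 := by
        have : 0 < 1 - lam₀ := by linarith
        rw [log_mul (by positivity) (by positivity), log_pow, log_sqrt (by positivity)]
  have hrhs : (log 2 + 1 / N * (log (1 / (1 - lam₀)) / 2 + 1)) * N
      = N * log 2 + log (1 / (1 - lam₀)) / 2 + 1 := by
    field_simp
    ring
  rw [div_le_iff₀ hN₀, hrhs]
  linarith
end
end
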